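/- arXiv:1901.10470 — 3 statements merged into one kernel-verified Lean document; each statement's English description precedes it below -/
import Mathlib

section
/- Let α ∈ ℓ^q with 1 < q < ∞ and let (y^(n)) be a sequence in ℓ^∞ with |y^(n)_j| ≤ (1/2)|α_j| for all j and n. If y^(n) converges componentwise to y*, then y^(n) → y* in the ℓ^∞ norm. -/
open scoped ENNReal
open Filter

/-- If `α ∈ ℓ^q` (`1 < q < ∞`) and `(y⁽ⁿ⁾) ⊂ ℓ^∞` satisfies
`|y⁽ⁿ⁾_j| ≤ (1/2)|α_j|` for all `j, n`, and `y⁽ⁿ⁾` converges componentwise to `y*`,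
then `y⁽ⁿ⁾ → y*` in the `ℓ^∞` norm. -/
theorem stmt_1 (q : ℝ≥0∞) (hq1 : 1 < q) (hq2 : q < ∞)
    (α : lp (fun _ : ℕ => ℝ) q)
    (y : ℕ → lp (fun _ : ℕ => ℝ) ∞) (ystar : lp (fun _ : ℕ => ℝ) ∞)
    (hbound : ∀ n j, |y n j| ≤ (1 / 2) * |α j|)
    (hcomp : ∀ j, Tendsto (fun n => y n j) atTop (nhds (ystar j))) :
    Tendsto y atTop (nhds ystar) := by
  have hq0 : 0 < q.toReal :=
    ENNReal.toReal_pos (by positivity) hq2.ne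
  have hstar : ∀ j, |ystar j| ≤ (1 / 2) * |α j| := fun j =>
    le_of_tendsto ((hcomp j).abs) (Eventually.of_forall fun n => hbound n j)
  have hs : Summable (fun j => ‖α j‖ ^ q.toReal) := (lp.memℓp α).summable hq0
  have h0 : Tendsto (fun j => ‖α j‖ ^ q.toReal) atTop (nhds 0) := hs.tendsto_atTop_zero
  rw [Metric.tendsto_atTop]
  intro ε hε
  have hε2 : 0 < ε / 2 := by positivity
  -- tail bound on α
  have htail : ∀ᶠ j in atTop, ‖α j‖ ^ q.toReal < (ε / 2) ^ q.toReal :=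
    h0.eventually (gt_mem_nhds (Real.rpow_pos_of_pos hε2 _))
  obtain ⟨J, hJ⟩ := htail.exists_forall_of_atTop
  have htail' : ∀ j, J ≤ j → |α j| < ε / 2 := fun j hj => by
    have := hJ j hj
    rwa [Real.rpow_lt_rpow_iff (norm_nonneg _) hε2.le hq0, Real.norm_eq_abs] at this
  -- head bound via componentwise convergence
  have hhead : ∀ᶠ n in atTop, ∀ j ∈ Finset.range J, |y n j - ystar j| < ε / 2 := by
    rw [eventually_all_finset]
    intro j _
    have := (Metric.tendsto_atTop.mp (hcomp j)) (ε / 2) hε2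
    obtain ⟨N, hN⟩ := this
    exact eventually_atTop.2 ⟨N, fun n hn => by simpa [Real.dist_eq] using hN n hn⟩
  obtain ⟨N, hN⟩ := hhead.exists_forall_of_atTop
  refine ⟨N, fun n hn => ?_⟩
  rw [dist_eq_norm]
  refine lt_of_le_of_lt (lp.norm_le_of_forall_le hε2.le fun j => ?_) (half_lt_self hε)
  have hcoe : ‖(y n - ystar) j‖ = |y n j - ystar j| := by
    simp [Real.norm_eq_abs]
  rw [hcoe]
  by_cases hj : j < J
  · exact (hN n hn j (Finset.mem_range.2 hj)).le
  · have hjJ : J ≤ j := le_of_not_gt hj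
    have h1 : |y n j - ystar j| ≤ |y n j| + |ystar j| := abs_sub _ _
    have h2 : |y n j| + |ystar j| ≤ |α j| := by
      have := hbound n j
      have := hstar j
      linarith
    linarith [htail' j hjJ]
end

section
/- Suppose (‖a_j‖)_{j≥1} is a sequence of nonnegative reals with ∑_j ‖a_j‖^p < ∞ for some p ∈ (1/2, 1). Define ε = 1 − p, α_j = ‖a_j‖^ε + 1/j, and q = p/(1−p). Then α = (α_j) ∈ ℓ^q and ∑_j ‖a_j‖/α_j ≤ ∑_j ‖a_j‖^p < ∞. -/
/-- If `∑_j ‖a_j‖^p < ∞` for `p ∈ (1/2, 1)` and we set `ε = 1 − p`,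
`α_j = ‖a_j‖^ε + 1/j` and `q = p/(1−p)`, then `α ∈ ℓ^q` and
`∑_j ‖a_j‖/α_j ≤ ∑_j ‖a_j‖^p < ∞`.  (Sequences are indexed by `j ≥ 1`, here
realised as `j : ℕ` with the `j`-th term using `j+1` in `1/j`.) -/
theorem stmt_4 (a : ℕ → ℝ) (ha : ∀ j, 0 ≤ a j)
    (p : ℝ) (hp1 : 1 / 2 < p) (hp2 : p < 1)
    (hsum : Summable fun j => a j ^ p)
    (ε q : ℝ) (hε : ε = 1 - p) (hq : q = p / (1 - p))
    (α : ℕ → ℝ) (hα : ∀ j, α j = a j ^ ε + 1 / (j + 1 : ℝ)) :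
    (Summable fun j => |α j| ^ q) ∧
    (Summable fun j => a j / α j) ∧
    (∑' j, a j / α j) ≤ ∑' j, a j ^ p := by
  have hp0 : 0 < p := lt_trans (by norm_num) hp1
  have hε0 : 0 < ε := by rw [hε]; linarith
  have h1p : (0:ℝ) < 1 - p := by linarith
  have hq1 : 1 < q := by
    rw [hq, lt_div_iff₀ h1p]; linarith
  have hq0 : 0 < q := lt_trans one_pos hq1
  -- positivity of α
  have hαpos : ∀ j : ℕ, 0 < α j := by
    intro j
    rw [hα j]
    have : (0:ℝ) < 1 / (j + 1 : ℝ) := by positivity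
    have h2 : 0 ≤ a j ^ ε := Real.rpow_nonneg (ha j) ε
    linarith
  -- pointwise bound a j / α j ≤ a j ^ p
  have hdiv : ∀ j : ℕ, a j / α j ≤ a j ^ p := by
    intro j
    rcases eq_or_lt_of_le (ha j) with h0 | h0
    · rw [← h0]
      simp [Real.zero_rpow (ne_of_gt hp0), div_nonneg le_rfl (le_of_lt (hαpos j))]
    · have hle : a j ^ ε ≤ α j := by
        rw [hα j]
        have : (0:ℝ) ≤ 1 / (j + 1 : ℝ) := by positivity
        linarith
      have hεpos : 0 < a j ^ ε := Real.rpow_pos_of_pos h0 ε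
      calc a j / α j ≤ a j / a j ^ ε := by gcongr
        _ = a j ^ (1:ℝ) / a j ^ ε := by rw [Real.rpow_one]
        _ = a j ^ (1 - ε) := (Real.rpow_sub h0 1 ε).symm
        _ = a j ^ p := by rw [hε]; ring_nf
  have hdivnn : ∀ j : ℕ, 0 ≤ a j / α j := fun j =>
    div_nonneg (ha j) (le_of_lt (hαpos j))
  have hsumdiv : Summable fun j => a j / α j :=
    Summable.of_nonneg_of_le hdivnn hdiv hsum
  refine ⟨?_, hsumdiv, Summable.tsum_le_tsum hdiv hsumdiv hsum⟩
  -- summability of |α j| ^ q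
  have hy : Summable fun j : ℕ => 1 / ((j : ℝ) + 1) ^ q := by
    have := (Real.summable_one_div_nat_rpow (p := q)).2 hq1
    have h2 := (summable_nat_add_iff 1).2 this
    simpa [Nat.cast_add] using h2
  have hg : Summable fun j : ℕ => 2 ^ q * (a j ^ p + 1 / ((j : ℝ) + 1) ^ q) :=
    (hsum.add hy).mul_left _
  refine Summable.of_nonneg_of_le (fun j => by positivity) (fun j => ?_) hg
  have habs : |α j| = α j := abs_of_pos (hαpos j)
  rw [habs, hα j]
  set x := a j ^ ε with hx
  set y := (1 : ℝ) / (j + 1 : ℝ) with hyd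
  have hx0 : 0 ≤ x := Real.rpow_nonneg (ha j) ε
  have hy0 : 0 ≤ y := by positivity
  have hmax : x + y ≤ 2 * max x y := by
    rcases le_total x y with h | h
    · have := max_eq_right h; rw [this]; linarith
    · have := max_eq_left h; rw [this]; linarith
  have hmax0 : 0 ≤ max x y := le_trans hx0 (le_max_left _ _)
  have step1 : (x + y) ^ q ≤ (2 * max x y) ^ q :=
    Real.rpow_le_rpow (by linarith) hmax (le_of_lt hq0)
  have step2 : (2 * max x y) ^ q = 2 ^ q * (max x y) ^ q :=
    Real.mul_rpow (by norm_num) hmax0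
  have step3 : (max x y) ^ q ≤ x ^ q + y ^ q := by
    rcases le_total x y with h | h
    · rw [max_eq_right h]
      have : 0 ≤ x ^ q := Real.rpow_nonneg hx0 q
      linarith
    · rw [max_eq_left h]
      have : 0 ≤ y ^ q := Real.rpow_nonneg hy0 q
      linarith
  have hxq : x ^ q = a j ^ p := by
    rw [hx, ← Real.rpow_mul (ha j)]
    congr 1
    rw [hε, hq]
    field_simp
  have hyq : y ^ q = 1 / ((j : ℝ) + 1) ^ q := by
    rw [hyd, Real.div_rpow (by norm_num) (by positivity), Real.one_rpow]
  calc (x + y) ^ q ≤ 2 ^ q * (max x y) ^ q := by rw [← step2]; exact step1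
    _ ≤ 2 ^ q * (x ^ q + y ^ q) := by
        have h2q : (0:ℝ) ≤ 2 ^ q := Real.rpow_nonneg (by norm_num) q
        nlinarith [step3]
    _ = 2 ^ q * (a j ^ p + 1 / ((j : ℝ) + 1) ^ q) := by rw [hxq, hyq]
end

section
/- Let T and T' be bounded self-adjoint operators on a Hilbert space H. Then for every μ in the spectrum of T, the distance from μ to the spectrum of T' is at most ‖T − T'‖, i.e., sup_{μ ∈ Σ(T)} dist(μ, Σ(T')) ≤ ‖T − T'‖_{H→H}. -/
open Metric ContinuousLinearMap
open scoped RealInnerProductSpace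

section Aux

variable {H : Type*} [NormedAddCommGroup H] [InnerProductSpace ℝ H] [CompleteSpace H]

/-- Cauchy–Schwarz for a positive symmetric operator: `‖P y‖² ≤ ‖P‖ ⟪P y, y⟫`. -/
lemma aux_cs (P : H →L[ℝ] H) (hsym : ∀ x y : H, ⟪P x, y⟫ = ⟪x, P y⟫)
    (hpos : ∀ z : H, 0 ≤ ⟪P z, z⟫) (y : H) : ‖P y‖ ^ 2 ≤ ‖P‖ * ⟪P y, y⟫ := by
  have key : ∀ u z : H, ⟪P u, z⟫ ^ 2 ≤ ⟪P u, u⟫ * ⟪P z, z⟫ := by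
    intro u z
    have hq : ∀ t : ℝ, 0 ≤ ⟪P z, z⟫ * (t * t) + (2 * ⟪P u, z⟫) * t + ⟪P u, u⟫ := by
      intro t
      have h0 := hpos (u + t • z)
      have hexp : ⟪P (u + t • z), u + t • z⟫ =
          ⟪P z, z⟫ * (t * t) + (2 * ⟪P u, z⟫) * t + ⟪P u, u⟫ := by
        rw [map_add, map_smul]
        simp only [inner_add_left, inner_add_right, real_inner_smul_left, real_inner_smul_right]
        have hc : ⟪P z, u⟫ = ⟪P u, z⟫ := by
          rw [hsym z u, real_inner_comm]
        rw [hc]; ring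
      linarith [hexp ▸ h0]
    have hd := discrim_le_zero hq
    rw [discrim] at hd
    nlinarith [hd]
  rcases eq_or_ne (P y) 0 with h | h
  · rw [h]
    simp
  · have h4 : 0 < ‖P y‖ := norm_pos_iff.mpr h
    have h1 := key y (P y)
    have h3 : ⟪P y, P y⟫ = ‖P y‖ ^ 2 := real_inner_self_eq_norm_sq _
    have h2 : ⟪P (P y), P y⟫ ≤ ‖P‖ * ‖P y‖ ^ 2 := by
      calc ⟪P (P y), P y⟫ ≤ ‖P (P y)‖ * ‖P y‖ := real_inner_le_norm _ _
        _ ≤ (‖P‖ * ‖P y‖) * ‖P y‖ := by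
            have := P.le_opNorm (P y)
            nlinarith [norm_nonneg (P y)]
        _ = ‖P‖ * ‖P y‖ ^ 2 := by ring
    have h5 : ⟪P y, y⟫ * ⟪P (P y), P y⟫ ≤ ⟪P y, y⟫ * (‖P‖ * ‖P y‖ ^ 2) :=
      mul_le_mul_of_nonneg_left h2 (hpos y)
    nlinarith [h1, h3, h5, mul_pos h4 h4, hpos y]

/-- A coercive self-adjoint operator is a unit (Lax–Milgram). -/
lemma aux_coercive_isUnit (S : H →L[ℝ] H) {c : ℝ} (hc : 0 < c)
    (h : ∀ x : H, c * ‖x‖ * ‖x‖ ≤ ⟪S x, x⟫) : IsUnit S := by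
  set B : H →L[ℝ] H →L[ℝ] ℝ := (innerSL ℝ).comp S with hB
  have hBapp : ∀ v w : H, B v w = ⟪S v, w⟫ := fun v w => rfl
  have hcoer : IsCoercive B := ⟨c, hc, fun u => by rw [hBapp]; exact h u⟩
  set e := hcoer.continuousLinearEquivOfBilin with he
  have heq : ∀ v : H, S v = e v := by
    intro v
    refine ext_inner_right ℝ fun w => ?_
    rw [hcoer.continuousLinearEquivOfBilin_apply v w, hBapp]
  refine ⟨⟨S, e.symm.toContinuousLinearMap, ?_, ?_⟩, rfl⟩
  · ext x
    simp [ContinuousLinearMap.mul_apply, heq (e.symm x)]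
  · ext x
    simp [ContinuousLinearMap.mul_apply, heq x]

/-- A self-adjoint operator bounded below is a unit. -/
lemma aux_boundedBelow_isUnit (A : H →L[ℝ] H) (hA : IsSelfAdjoint A) {c : ℝ} (hc : 0 < c)
    (h : ∀ x : H, c * ‖x‖ ≤ ‖A x‖) : IsUnit A := by
  have hs : ∀ u v : H, ⟪A u, v⟫ = ⟪u, A v⟫ := fun u v => hA.isSymmetric u v
  have hsq : IsUnit (A * A) := by
    apply aux_coercive_isUnit (A * A) (mul_pos hc hc)
    intro x
    have h1 : ⟪(A * A) x, x⟫ = ‖A x‖ ^ 2 := by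
      rw [ContinuousLinearMap.mul_apply, hs (A x) x, ← real_inner_self_eq_norm_sq, real_inner_comm]
    rw [h1]
    nlinarith [mul_self_le_mul_self (by positivity : (0:ℝ) ≤ c * ‖x‖) (h x)]
  obtain ⟨u, hu⟩ := hsq
  have h1 : A * (A * (↑u⁻¹ : H →L[ℝ] H)) = 1 := by
    rw [← mul_assoc, ← hu]; exact u.mul_inv
  have h2 : ((↑u⁻¹ : H →L[ℝ] H) * A) * A = 1 := by
    rw [mul_assoc, ← hu]; exact u.inv_mul
  have h3 : A * (↑u⁻¹ : H →L[ℝ] H) = (↑u⁻¹ : H →L[ℝ] H) * A := by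
    calc A * (↑u⁻¹ : H →L[ℝ] H) = 1 * (A * ↑u⁻¹) := (one_mul _).symm
      _ = (((↑u⁻¹ : H →L[ℝ] H) * A) * A) * (A * ↑u⁻¹) := by rw [h2]
      _ = ((↑u⁻¹ : H →L[ℝ] H) * A) * (A * (A * ↑u⁻¹)) := by
          simp only [mul_assoc]
      _ = ((↑u⁻¹ : H →L[ℝ] H) * A) * 1 := by rw [h1]
      _ = (↑u⁻¹ : H →L[ℝ] H) * A := mul_one _
  refine isUnit_iff_exists.mpr ⟨A * (↑u⁻¹ : H →L[ℝ] H), h1, ?_⟩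
  rw [h3]; exact h2

set_option maxHeartbeats 1000000 in
/-- Key lower bound: for self-adjoint `A`, `dist(μ, Σ(A)) ‖x‖ ≤ ‖(A - μ) x‖`. -/
lemma aux_lower (A : H →L[ℝ] H) (hA : IsSelfAdjoint A) (μ : ℝ) (x : H) :
    Metric.infDist μ (spectrum ℝ A) * ‖x‖ ≤ ‖A x - μ • x‖ := by
  by_contra hcon
  push_neg at hcon
  set d := Metric.infDist μ (spectrum ℝ A) with hd
  have hnn : (0:ℝ) ≤ ‖A x - μ • x‖ := norm_nonneg _
  have hdx : 0 < d * ‖x‖ := lt_of_le_of_lt hnn hcon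
  have hx0 : x ≠ 0 := by
    rintro rfl
    simp at hdx
  have hxn : 0 < ‖x‖ := norm_pos_iff.mpr hx0
  have hd0 : 0 < d := by
    by_contra h
    push_neg at h
    nlinarith
  -- the Rayleigh-type quantity
  set q : H → ℝ := fun y => ‖A y - μ • y‖ ^ 2 with hq
  set R : Set ℝ := q '' Metric.sphere (0 : H) 1 with hR
  have hRne : R.Nonempty := by
    refine ⟨q (‖x‖⁻¹ • x), ⟨‖x‖⁻¹ • x, ?_, rfl⟩⟩
    rw [mem_sphere_zero_iff_norm, norm_smul, norm_inv, norm_norm,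
      inv_mul_cancel₀ hxn.ne']
  have hRbdd : BddBelow R := by
    refine ⟨0, fun r hr => ?_⟩
    obtain ⟨y, _, rfl⟩ := hr
    positivity
  set m := sInf R with hm
  have hm0 : 0 ≤ m := le_csInf hRne fun r hr => by
    obtain ⟨y, _, rfl⟩ := hr; positivity
  have hqsmul : ∀ (t : ℝ) (y : H), q (t • y) = t ^ 2 * q y := by
    intro t y
    simp only [hq, map_smul]
    rw [show t • A y - μ • t • y = t • (A y - μ • y) from by module,
      norm_smul, mul_pow, Real.norm_eq_abs, sq_abs]
  have hmd : m < d ^ 2 := by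
    have h1 : m ≤ q (‖x‖⁻¹ • x) :=
      csInf_le hRbdd ⟨‖x‖⁻¹ • x, by
        rw [mem_sphere_zero_iff_norm, norm_smul, norm_inv, norm_norm,
          inv_mul_cancel₀ hxn.ne'], rfl⟩
    have h2 : q (‖x‖⁻¹ • x) = ‖x‖⁻¹ ^ 2 * q x := hqsmul _ _
    have h3 : q x < (d * ‖x‖) ^ 2 := by
      simp only [hq]
      nlinarith [norm_nonneg (A x - μ • x)]
    have h4 : ‖x‖⁻¹ ^ 2 * q x < ‖x‖⁻¹ ^ 2 * (d * ‖x‖) ^ 2 := by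
      apply mul_lt_mul_of_pos_left h3
      positivity
    have h5 : ‖x‖⁻¹ ^ 2 * (d * ‖x‖) ^ 2 = d ^ 2 := by
      field_simp
    nlinarith [h1, h2, h4, h5]
  -- m‖y‖² ≤ q y for all y
  have hformpos : ∀ y : H, m * ‖y‖ ^ 2 ≤ q y := by
    intro y
    rcases eq_or_ne y 0 with rfl | hy0
    · simp [hq]
    · have hyn : 0 < ‖y‖ := norm_pos_iff.mpr hy0
      have h1 : m ≤ q (‖y‖⁻¹ • y) :=
        csInf_le hRbdd ⟨‖y‖⁻¹ • y, by
          rw [mem_sphere_zero_iff_norm, norm_smul, norm_inv, norm_norm,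
            inv_mul_cancel₀ hyn.ne'], rfl⟩
      rw [hqsmul] at h1
      have h3 := mul_le_mul_of_nonneg_right h1 (sq_nonneg ‖y‖)
      have h4 : ‖y‖⁻¹ ^ 2 * q y * ‖y‖ ^ 2 = q y := by
        field_simp
      linarith
  -- μ ± √m are in the resolvent set
  have hsqm : Real.sqrt m < d := by
    rw [show d = Real.sqrt (d ^ 2) by rw [Real.sqrt_sq hd0.le]]
    exact Real.sqrt_lt_sqrt hm0 hmd
  have hres : ∀ ν : ℝ, |μ - ν| < d → IsUnit (algebraMap ℝ (H →L[ℝ] H) ν - A) := by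
    intro ν hν
    rw [← spectrum.notMem_iff]
    intro hmem
    have := Metric.infDist_le_dist_of_mem (x := μ) hmem
    rw [Real.dist_eq] at this
    exact absurd (lt_of_le_of_lt this hν) (lt_irrefl d)
  have hsu : IsUnit (algebraMap ℝ (H →L[ℝ] H) (μ + Real.sqrt m) - A) := by
    refine hres _ ?_
    rw [show μ - (μ + Real.sqrt m) = -(Real.sqrt m) by ring, abs_neg,
      abs_of_nonneg (Real.sqrt_nonneg m)]
    exact hsqm
  have htu : IsUnit (algebraMap ℝ (H →L[ℝ] H) (μ - Real.sqrt m) - A) := by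
    refine hres _ ?_
    rw [show μ - (μ - Real.sqrt m) = Real.sqrt m by ring,
      abs_of_nonneg (Real.sqrt_nonneg m)]
    exact hsqm
  -- the product is w := (A - μ)² - m
  set C : H →L[ℝ] H := A - algebraMap ℝ (H →L[ℝ] H) μ with hC
  set w : H →L[ℝ] H := C * C - algebraMap ℝ (H →L[ℝ] H) m with hw
  have hCapp : ∀ y : H, C y = A y - μ • y := by
    intro y
    simp [hC, Algebra.algebraMap_eq_smul_one]
  have hkey : (algebraMap ℝ (H →L[ℝ] H) (μ + Real.sqrt m) - A) *
      (algebraMap ℝ (H →L[ℝ] H) (μ - Real.sqrt m) - A) = w := by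
    have hmm : Real.sqrt m * Real.sqrt m = m := Real.mul_self_sqrt hm0
    set r : ℝ := Real.sqrt m with hr
    ext y
    simp only [ContinuousLinearMap.mul_apply, ContinuousLinearMap.sub_apply,
      Algebra.algebraMap_eq_smul_one, ContinuousLinearMap.smul_apply,
      ContinuousLinearMap.one_apply, ContinuousLinearMap.add_apply, map_sub, map_smul, hw, hC,
      map_add]
    rw [← hmm]
    module
  have hwu : IsUnit w := hkey ▸ hsu.mul htu
  -- w is symmetric and its quadratic form is q y - m ‖y‖²
  have hCsa : IsSelfAdjoint C := by
    exact hA.sub (IsSelfAdjoint.algebraMap _ (star_trivial μ))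
  have hwsa : IsSelfAdjoint w := by
    refine IsSelfAdjoint.sub ?_ ?_
    · rw [IsSelfAdjoint, star_mul, hCsa.star_eq]
    · exact IsSelfAdjoint.algebraMap _ (star_trivial m)
  have hwsym : ∀ y z : H, ⟪w y, z⟫ = ⟪y, w z⟫ := fun y z => hwsa.isSymmetric y z
  have hwform : ∀ y : H, ⟪w y, y⟫ = q y - m * ‖y‖ ^ 2 := by
    intro y
    have hCs : ∀ u v : H, ⟪C u, v⟫ = ⟪u, C v⟫ := fun u v => hCsa.isSymmetric u v
    have e1 : w y = C (C y) - m • y := by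
      simp [hw, Algebra.algebraMap_eq_smul_one]
    rw [e1, inner_sub_left, real_inner_smul_left, hCs (C y) y,
      real_inner_self_eq_norm_sq, real_inner_self_eq_norm_sq, hCapp y]
  have hwpos : ∀ y : H, 0 ≤ ⟪w y, y⟫ := by
    intro y
    rw [hwform y]
    linarith [hformpos y]
  -- w is bounded below since it is a unit
  obtain ⟨u, hu⟩ := hwu
  set K := ‖((↑u⁻¹ : H →L[ℝ] H))‖ with hK
  have hlowK : ∀ y : H, ‖y‖ ≤ K * ‖w y‖ := by
    intro y
    have h1 : ((↑u⁻¹ : H →L[ℝ] H)) (w y) = y := by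
      rw [← hu, ← ContinuousLinearMap.mul_apply, u.inv_mul, ContinuousLinearMap.one_apply]
    calc ‖y‖ = ‖((↑u⁻¹ : H →L[ℝ] H)) (w y)‖ := by rw [h1]
      _ ≤ K * ‖w y‖ := ContinuousLinearMap.le_opNorm _ _
  -- choose a near-minimizer
  set ε : ℝ := ((K + 1) ^ 2 * (‖w‖ + 1))⁻¹ with hε
  have hεpos : 0 < ε := by positivity
  obtain ⟨r, hrR, hrlt⟩ : ∃ r ∈ R, r < m + ε := by
    by_contra h
    push_neg at h
    have := le_csInf hRne h
    linarith [this]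
  obtain ⟨y, hysph, rfl⟩ := hrR
  have hy1 : ‖y‖ = 1 := mem_sphere_zero_iff_norm.mp hysph
  have hf : ⟪w y, y⟫ = q y - m := by rw [hwform y, hy1]; ring
  have hflt : ⟪w y, y⟫ < ε := by rw [hf]; linarith
  have hf0 : 0 ≤ ⟪w y, y⟫ := hwpos y
  have hcs : ‖w y‖ ^ 2 ≤ ‖w‖ * ⟪w y, y⟫ := aux_cs w hwsym hwpos y
  have hKy : 1 ≤ K * ‖w y‖ := by
    have := hlowK y
    rwa [hy1] at this
  have hKpos : 0 < K := by
    by_contra h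
    push_neg at h
    nlinarith [norm_nonneg (w y)]
  have hεmul : ((K + 1) ^ 2 * (‖w‖ + 1)) * ε = 1 := by
    rw [hε]
    field_simp
  rcases eq_or_lt_of_le (norm_nonneg w) with hw0 | hw0
  · have hwz : w = 0 := by rwa [eq_comm, norm_eq_zero] at hw0
    have hzero : ‖w y‖ = 0 := by rw [hwz]; simp
    rw [hzero] at hKy
    nlinarith [hKy]
  · have h1 : 1 ≤ (K * ‖w y‖) ^ 2 := by nlinarith [hKy, sq_nonneg (K * ‖w y‖ - 1)]
    have h3 : K ^ 2 * ‖w y‖ ^ 2 ≤ K ^ 2 * (‖w‖ * ⟪w y, y⟫) :=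
      mul_le_mul_of_nonneg_left hcs (sq_nonneg K)
    have h4 : K ^ 2 * (‖w‖ * ⟪w y, y⟫) < K ^ 2 * (‖w‖ * ε) := by
      apply mul_lt_mul_of_pos_left _ (by positivity)
      exact mul_lt_mul_of_pos_left hflt hw0
    have e1 : K ^ 2 ≤ (K + 1) ^ 2 := by nlinarith [hKpos.le]
    have e2 : ‖w‖ * ε ≤ (‖w‖ + 1) * ε := by nlinarith [hεpos.le]
    have h5 : K ^ 2 * (‖w‖ * ε) ≤ (K + 1) ^ 2 * ((‖w‖ + 1) * ε) :=
      mul_le_mul e1 e2 (by positivity) (by positivity)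
    have h6 : (K + 1) ^ 2 * ((‖w‖ + 1) * ε) = 1 := by
      calc (K + 1) ^ 2 * ((‖w‖ + 1) * ε) = ((K + 1) ^ 2 * (‖w‖ + 1)) * ε := by ring
        _ = 1 := hεmul
    nlinarith [h1, h3, h4, h5, h6]

end Aux

/-- For bounded self-adjoint operators `T, T'` on a Hilbert space,
every `μ ∈ Σ(T)` satisfies `dist(μ, Σ(T')) ≤ ‖T − T'‖`. -/
theorem stmt_9 {H : Type*} [NormedAddCommGroup H] [InnerProductSpace ℝ H]
    [CompleteSpace H]
    (T T' : H →L[ℝ] H) (hT : IsSelfAdjoint T) (hT' : IsSelfAdjoint T') :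
    ∀ μ ∈ spectrum ℝ T, Metric.infDist μ (spectrum ℝ T') ≤ ‖T - T'‖ := by
  intro μ hμ
  by_contra hcon
  push_neg at hcon
  set d := Metric.infDist μ (spectrum ℝ T') with hd
  have hc0 : (0:ℝ) ≤ ‖T - T'‖ := norm_nonneg _
  have hd0 : 0 < d := lt_of_le_of_lt hc0 hcon
  have hlow : ∀ x : H, (d - ‖T - T'‖) * ‖x‖ ≤ ‖(T - algebraMap ℝ (H →L[ℝ] H) μ) x‖ := by
    intro x
    have h1 : d * ‖x‖ ≤ ‖T' x - μ • x‖ := aux_lower T' hT' μ x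
    have h2 : ‖T' x - μ • x‖ ≤ ‖T x - μ • x‖ + ‖(T' - T) x‖ := by
      have heq : T' x - μ • x = (T x - μ • x) + ((T' - T) x) := by
        simp only [ContinuousLinearMap.sub_apply]
        abel
      rw [heq]
      exact norm_add_le _ _
    have h3 : ‖(T' - T) x‖ ≤ ‖T - T'‖ * ‖x‖ := by
      have := (T' - T).le_opNorm x
      rwa [show ‖T' - T‖ = ‖T - T'‖ from norm_sub_rev _ _] at this
    have h4 : (T - algebraMap ℝ (H →L[ℝ] H) μ) x = T x - μ • x := by
      simp [Algebra.algebraMap_eq_smul_one]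
    rw [h4]
    linarith
  have hsa : IsSelfAdjoint (T - algebraMap ℝ (H →L[ℝ] H) μ) := by
    exact hT.sub (IsSelfAdjoint.algebraMap _ (star_trivial μ))
  have hu : IsUnit (T - algebraMap ℝ (H →L[ℝ] H) μ) :=
    aux_boundedBelow_isUnit _ hsa (by linarith : (0:ℝ) < d - ‖T - T'‖) hlow
  have : IsUnit (algebraMap ℝ (H →L[ℝ] H) μ - T) := by
    rw [← neg_sub]
    exact hu.neg
  exact spectrum.mem_iff.mp hμ this
end
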